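/- arXiv:1403.7497 — 2 statements merged into one kernel-verified Lean document; each statement's English description precedes it below -/
import Mathlib

section
/- Consider the reconstruction scheme for the Burgers equation $f(u) = u^2/2$ with $V_{mesh}=0$, time step $\Delta t$, cell width $\Delta x$, applied to data representing a single entropy shock: $u_j = u_l$ for $j < j_0$, $u_{j_0} = \frac{\delta}{\Delta x} u_l + \frac{\Delta x - \delta}{\Delta x} u_r$, $u_j = u_r$ for $j > j_0$, where $u_l > u_r > 0$, $\delta \in [0, \Delta x]$, $\sigma = (u_l+u_r)/2$, and suppose $\delta + \sigma \Delta t \le \Delta x$ (the shock does not leave cell $j_0$). Then after one time step of the scheme, $u_j^{new} = u_l$ for $j < j_0$, $u_{j_0}^{new} = \frac{\delta'}{\Delta x} u_l + \frac{\Delta x - \delta'}{\Delta x} u_r$ with $\delta' = \delta + \sigma \Delta t$, and $u_j^{new} = u_r$ for $j > j_0$. -/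
/-! The fluxes are `f ul` left of the shock cell and `f ur` right of it, so the conservative
update leaves every cell but `j0` untouched and adds `dt / dx * (f ul - f ur)` to `u j0`.
By the Rankine–Hugoniot relation `f ul - f ur = σ (ul - ur)` this is exactly the change of
the cell average when the shock position `δ` advances by `σ dt`. -/

theorem step_sub_step_pred {G : Type*} [AddGroup G] (j0 j : ℤ) (a b : G) :
    ((if j < j0 then a else b) - if j - 1 < j0 then a else b) =
      if j = j0 then b - a else 0 := by
  split_ifs <;> first | omega | simp_all

theorem burgers_rankine_hugoniot (ul ur : ℝ) :
    ul ^ 2 / 2 - ur ^ 2 / 2 = (ul + ur) / 2 * (ul - ur) := by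
  ring

theorem cellAverage_add_shift (dx δ s ul ur : ℝ) :
    δ / dx * ul + (dx - δ) / dx * ur + s / dx * (ul - ur) =
      (δ + s) / dx * ul + (dx - (δ + s)) / dx * ur := by
  simp only [sub_div]
  ring

theorem stmt_6_general (dx dt : ℝ)
    (f : ℝ → ℝ) (hf : f = fun u => u ^ 2 / 2)
    (ul ur : ℝ)
    (δ : ℝ)
    (σ : ℝ) (hσ : σ = (ul + ur) / 2)
    (j0 : ℤ) (u : ℤ → ℝ)
    (hu : u = fun j => if j < j0 then ul
      else if j = j0 then δ / dx * ul + (dx - δ) / dx * ur else ur)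
    -- fluxes: f_{j+1/2} indexed by j; reconstruction in cell j0 gives
    -- f_{j0-1/2} = f ul, f_{j0+1/2} = f ur (crossing time exceeds dt),
    -- elsewhere f_{j+1/2} = f (u j)
    (flux : ℤ → ℝ)
    (hflux : flux = fun j => if j < j0 then f ul else f ur)
    (unew : ℤ → ℝ)
    (hunew : unew = fun j => u j - dt / dx * (flux j - flux (j - 1)))
    (δ' : ℝ) (hδ' : δ' = δ + σ * dt) :
    (∀ j < j0, unew j = ul) ∧
    unew j0 = δ' / dx * ul + (dx - δ') / dx * ur ∧
    (∀ j > j0, unew j = ur) := by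
  subst hf hσ hu hflux hunew hδ'
  simp only [step_sub_step_pred]
  refine ⟨fun j hj => ?_, ?_, fun j hj => ?_⟩
  · simp [hj, hj.ne]
  · simp only [lt_irrefl, if_false, if_true]
    rw [← neg_sub, burgers_rankine_hugoniot, ← cellAverage_add_shift]
    ring
  · simp [hj.not_gt, hj.ne']

theorem stmt_6 (dx dt : ℝ) (hdx : 0 < dx) (hdt : 0 < dt)
    (f : ℝ → ℝ) (hf : f = fun u => u ^ 2 / 2)
    (ul ur : ℝ) (hlr : ul > ur) (hr : ur > 0)
    (δ : ℝ) (hδ0 : 0 ≤ δ) (hδ1 : δ ≤ dx)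
    (σ : ℝ) (hσ : σ = (ul + ur) / 2)
    (hstay : δ + σ * dt ≤ dx)
    (j0 : ℤ) (u : ℤ → ℝ)
    (hu : u = fun j => if j < j0 then ul
      else if j = j0 then δ / dx * ul + (dx - δ) / dx * ur else ur)
    -- fluxes: f_{j+1/2} indexed by j; reconstruction in cell j0 gives
    -- f_{j0-1/2} = f ul, f_{j0+1/2} = f ur (crossing time exceeds dt),
    -- elsewhere f_{j+1/2} = f (u j)
    (flux : ℤ → ℝ)
    (hflux : flux = fun j => if j < j0 then f ul else f ur)
    (unew : ℤ → ℝ)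
    (hunew : unew = fun j => u j - dt / dx * (flux j - flux (j - 1)))
    (δ' : ℝ) (hδ' : δ' = δ + σ * dt) :
    (∀ j < j0, unew j = ul) ∧
    unew j0 = δ' / dx * ul + (dx - δ') / dx * ur ∧
    (∀ j > j0, unew j = ur) :=
  stmt_6_general dx dt f hf ul ur δ σ hσ j0 u hu flux hflux unew hunew δ' hδ'
end

section
/- Consider the reconstruction scheme for the Burgers equation with $V_{mesh}=0$ applied to the pure shock data as above with $u_l > u_r > 0$, $\delta \in [0,\Delta x]$, $\sigma=(u_l+u_r)/2$, but now suppose $\delta + \sigma \Delta t > \Delta x$. With flux $f_{j_0+1/2} = \frac{\Delta x - \delta}{\Delta t}(u_r - u_l) + f(u_l)$, $f_{j_0-1/2} = f(u_l)$, $f_{j_0+3/2} = f(u_r)$, the updated values satisfy $u_{j_0}^{new} = u_l$ and $u_{j_0+1}^{new} = \frac{\delta'}{\Delta x} u_l + \frac{\Delta x - \delta'}{\Delta x} u_r$ where $\delta' = \delta + \sigma \Delta t - \Delta x$. -/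
/-!
For a convex combination `δ/Δx · u_l + (Δx - δ)/Δx · u_r` the flux at the shock interface removes
exactly the mass `(Δx - δ)(u_r - u_l)` that keeps the shock cell from being `u_l`, whatever the
flux function is. In the next cell the only input from the flux function is the Rankine–Hugoniot
relation `f(u_r) - f(u_l) = σ (u_r - u_l)`, which for Burgers' flux holds with `σ = (u_l + u_r)/2`;
the update then moves the shock position to `δ + σ Δt - Δx`.
-/

theorem burgers_flux_sub (ul ur : ℝ) :
    ur ^ 2 / 2 - ul ^ 2 / 2 = (ul + ur) / 2 * (ur - ul) := by
  ring

section CellUpdate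

variable {dx dt : ℝ} (ul ur δ : ℝ)

theorem update_shock_cell (hdx : dx ≠ 0) (hdt : dt ≠ 0) :
    δ / dx * ul + (dx - δ) / dx * ur
      - dt / dx * ((dx - δ) / dt * (ur - ul)) = ul := by
  field_simp
  ring

theorem update_cell_past_shock (f : ℝ → ℝ) (hdx : dx ≠ 0) (hdt : dt ≠ 0) {σ : ℝ}
    (hRH : f ur - f ul = σ * (ur - ul)) :
    ur - dt / dx * (f ur - ((dx - δ) / dt * (ur - ul) + f ul))
      = (δ + σ * dt - dx) / dx * ul + (dx - (δ + σ * dt - dx)) / dx * ur := by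
  have hjump : f ur - ((dx - δ) / dt * (ur - ul) + f ul) = (σ - (dx - δ) / dt) * (ur - ul) := by
    linear_combination hRH
  rw [hjump]
  field_simp
  ring

end CellUpdate

theorem stmt_7_general (dx dt : ℝ) (hdx : 0 < dx) (hdt : 0 < dt)
    (f : ℝ → ℝ) (hf : f = fun u => u ^ 2 / 2)
    (ul ur : ℝ)
    (δ : ℝ)
    (σ : ℝ) (hσ : σ = (ul + ur) / 2)
    (j0 : ℤ) (u : ℤ → ℝ)
    (hu : u = fun j => if j < j0 then ul
      else if j = j0 then δ / dx * ul + (dx - δ) / dx * ur else ur)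
    (flux : ℤ → ℝ)
    (hflux : flux = fun j => if j < j0 then f ul
      else if j = j0 then (dx - δ) / dt * (ur - ul) + f ul else f ur)
    (unew : ℤ → ℝ)
    (hunew : unew = fun j => u j - dt / dx * (flux j - flux (j - 1)))
    (δ' : ℝ) (hδ' : δ' = δ + σ * dt - dx) :
    unew j0 = ul ∧ unew (j0 + 1) = δ' / dx * ul + (dx - δ') / dx * ur := by
  subst hu hflux hunew hδ'
  have hRH : f ur - f ul = σ * (ur - ul) := by
    rw [hf, hσ]
    exact burgers_flux_sub ul ur
  simp only [lt_irrefl, if_false, if_true, sub_lt_self j0 zero_lt_one,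
    show ¬ j0 + 1 < j0 by omega, show j0 + 1 ≠ j0 by omega, add_sub_cancel_right]
  exact ⟨update_shock_cell ul ur δ hdx.ne' hdt.ne',
    update_cell_past_shock ul ur δ f hdx.ne' hdt.ne' hRH⟩

theorem stmt_7 (dx dt : ℝ) (hdx : 0 < dx) (hdt : 0 < dt)
    (f : ℝ → ℝ) (hf : f = fun u => u ^ 2 / 2)
    (ul ur : ℝ) (hlr : ul > ur) (hr : ur > 0)
    (δ : ℝ) (hδ0 : 0 ≤ δ) (hδ1 : δ ≤ dx)
    (σ : ℝ) (hσ : σ = (ul + ur) / 2)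
    (hcross : δ + σ * dt > dx)
    (j0 : ℤ) (u : ℤ → ℝ)
    (hu : u = fun j => if j < j0 then ul
      else if j = j0 then δ / dx * ul + (dx - δ) / dx * ur else ur)
    (flux : ℤ → ℝ)
    (hflux : flux = fun j => if j < j0 then f ul
      else if j = j0 then (dx - δ) / dt * (ur - ul) + f ul else f ur)
    (unew : ℤ → ℝ)
    (hunew : unew = fun j => u j - dt / dx * (flux j - flux (j - 1)))
    (δ' : ℝ) (hδ' : δ' = δ + σ * dt - dx) :
    unew j0 = ul ∧ unew (j0 + 1) = δ' / dx * ul + (dx - δ') / dx * ur :=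
  stmt_7_general dx dt hdx hdt f hf ul ur δ σ hσ j0 u hu flux hflux unew hunew δ' hδ'
end
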